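/- Let 1 ≤ p < ∞ and let P be a Dirichlet polynomial. Let T(z) = 1/2 + (1−z)/(1+z) and ψ(s) = T(2^{−s}). Then (1/(2T)) ∫_{−T}^{T} |P(ψ(it))|^p dt converges, as T → ∞, to (1/π) ∫_ℝ |P(1/2 + it)|^p dt/(1 + t²). -/

import Mathlib

open MeasureTheory Filter

/-- The Dirichlet polynomial `P(s) = ∑_{n=1}^N a_n n^{-s}`. -/
noncomputable def dPoly (N : ℕ) (a : ℕ → ℂ) (s : ℂ) : ℂ :=
  ∑ n ∈ Finset.Icc 1 N, a n * (n : ℂ) ^ (-s)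

/-- `ψ(s) = T(2^{-s})` where `T(z) = 1/2 + (1-z)/(1+z)`. -/
noncomputable def psiMap (s : ℂ) : ℂ :=
  1/2 + (1 - (2 : ℂ) ^ (-s)) / (1 + (2 : ℂ) ^ (-s))

/-!
On the imaginary axis `ψ(it) = 1/2 + i tan (t log 2 / 2)`, so `t ↦ |P(ψ(it))|^p` is periodic
with period `2π / log 2`, and its symmetric averages over `[-T, T]` converge to its mean over one
period. The substitution `u = tan (t log 2 / 2)` turns that mean into
`(1/π) ∫ |P(1/2 + iu)|^p du / (1 + u²)`.
-/

open Topology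

theorem continuous_dPoly (N : ℕ) (a : ℕ → ℂ) : Continuous (dPoly N a) :=
  continuous_finsetSum _ fun _ hn => continuous_const.mul <| continuous_neg.const_cpow <|
    Or.inl (Nat.cast_ne_zero.mpr (Nat.one_le_iff_ne_zero.mp (Finset.mem_Icc.mp hn).1))

theorem norm_dPoly_le (N : ℕ) (a : ℕ → ℂ) (s : ℂ) :
    ‖dPoly N a s‖ ≤ ∑ n ∈ Finset.Icc 1 N, ‖a n‖ * (n : ℝ) ^ (-s.re) :=
  (norm_sum_le _ _).trans <| Finset.sum_le_sum fun n hn => by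
    have hn : (0 : ℝ) < n := Nat.cast_pos.mpr (Finset.mem_Icc.mp hn).1
    rw [norm_mul, ← Complex.ofReal_natCast, Complex.norm_cpow_eq_rpow_re_of_pos hn, Complex.neg_re]

-- Both sides take the junk value `0` when `cos θ = 0`.
theorem Complex.tan_mul_I_eq_one_sub_exp_div_one_add_exp (θ : ℂ) :
    tan θ * I = (1 - exp (-(2 * θ) * I)) / (1 + exp (-(2 * θ) * I)) := by
  have hvv : exp (-(2 * θ) * I) = exp (-θ * I) * exp (-θ * I) := by rw [← exp_add]; ring_nf
  rw [hvv, tan_eq_sin_div_cos, sin, cos]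
  set u := exp (θ * I)
  set v := exp (-θ * I)
  have huv : u * v = 1 := by rw [← exp_add]; simp
  rw [← huv, ← sub_mul, ← add_mul, mul_div_mul_right _ _ (exp_ne_zero _)]
  calc (v - u) * I / 2 / ((u + v) / 2) * I = (v - u) * (I * I) / (u + v) := by
        rw [div_div_div_cancel_right₀ two_ne_zero]; ring
    _ = (u - v) / (u + v) := by rw [I_mul_I]; ring

theorem psiMap_I_mul_ofReal (t : ℝ) :
    psiMap (Complex.I * t) = 1 / 2 + (Real.tan (t * Real.log 2 / 2) : ℂ) * Complex.I := by
  rw [psiMap, Complex.ofReal_tan, Complex.tan_mul_I_eq_one_sub_exp_div_one_add_exp,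
    Complex.cpow_def_of_ne_zero two_ne_zero]
  have hlog : (Real.log 2 : ℂ) = Complex.log 2 := by
    rw [Complex.ofReal_log zero_le_two, Complex.ofReal_ofNat]
  push_cast
  rw [hlog]
  ring_nf

theorem Function.Periodic.tendsto_average_intervalIntegral {E : Type*} [NormedAddCommGroup E]
    [NormedSpace ℝ E] [CompleteSpace E] {g : ℝ → E} {τ : ℝ} (hg : Periodic g τ) (hτ : τ ≠ 0)
    (hint : IntervalIntegrable g volume 0 τ) :
    Tendsto (fun T : ℝ => (2 * T)⁻¹ • ∫ x in (-T)..T, g x) atTop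
      (𝓝 (τ⁻¹ • ∫ x in (0 : ℝ)..τ, g x)) := by
  set M := ∫ x in (0 : ℝ)..τ, g x
  have hloc : ∀ a b, IntervalIntegrable g volume a b :=
    hg.intervalIntegrable (t := 0) hτ (by simpa using hint)
  -- `F` is the primitive of `g` with its linear growth removed.
  set F : ℝ → E := fun t => (∫ x in (0 : ℝ)..t, g x) - (t / τ) • M
  have hF_periodic : Periodic F τ := fun t => by
    have hshift : ∫ x in t..t + τ, g x = M := by simpa using hg.intervalIntegral_add_eq t 0
    simp only [F, ← intervalIntegral.integral_add_adjacent_intervals (hloc 0 t) (hloc t (t + τ)),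
      hshift, add_div, div_self hτ, add_smul, one_smul]
    abel
  have hF_cont : Continuous F :=
    (intervalIntegral.continuous_primitive hloc 0).sub
      ((continuous_id.div_const τ).smul continuous_const)
  obtain ⟨C, hC⟩ :=
    isBounded_iff_forall_norm_le.mp (hF_periodic.isBounded_of_continuous hτ hF_cont)
  have hF_diff_bdd : IsBoundedUnder (· ≤ ·) atTop fun T => ‖F T - F (-T)‖ :=
    isBoundedUnder_of ⟨C + C, fun T =>
      (norm_sub_le _ _).trans (add_le_add (hC _ ⟨T, rfl⟩) (hC _ ⟨-T, rfl⟩))⟩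
  have hdecomp : ∀ T : ℝ, T ≠ 0 →
      (2 * T)⁻¹ • ∫ x in (-T)..T, g x = (2 * T)⁻¹ • (F T - F (-T)) + τ⁻¹ • M := fun T hT => by
    have hF : F T - F (-T) = (∫ x in (-T)..T, g x) - (2 * T / τ) • M := by
      rw [← intervalIntegral.integral_interval_sub_left (hloc 0 T) (hloc 0 (-T)),
        show 2 * T / τ = T / τ - -T / τ by ring, sub_smul]
      simp only [F]
      abel
    rw [hF, smul_sub, smul_smul, show (2 * T)⁻¹ * (2 * T / τ) = τ⁻¹ by field_simp, sub_add_cancel]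
  have hlim :
      Tendsto (fun T : ℝ => (2 * T)⁻¹ • (F T - F (-T)) + τ⁻¹ • M) atTop (𝓝 (0 + τ⁻¹ • M)) :=
    ((tendsto_id.const_mul_atTop two_pos).inv_tendsto_atTop.zero_smul_isBoundedUnder_le
      hF_diff_bdd).add tendsto_const_nhds
  rw [zero_add] at hlim
  refine hlim.congr' ?_
  filter_upwards [eventually_ne_atTop 0] with T hT using (hdecomp T hT).symm

theorem Real.measurable_tan : Measurable Real.tan := by
  have htan : Real.tan = Real.sin / Real.cos := funext Real.tan_eq_sin_div_cos
  exact htan ▸ Real.continuous_sin.measurable.div Real.continuous_cos.measurable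

theorem intervalIntegrable_comp_tan_mul {E : Type*} [NormedAddCommGroup E] {f : ℝ → E}
    (hf : Continuous f) {C : ℝ} (hC : ∀ u, ‖f u‖ ≤ C) (c a b : ℝ) :
    IntervalIntegrable (fun x => f (Real.tan (x * c))) volume a b := by
  have hmeas : AEStronglyMeasurable (fun x => f (Real.tan (x * c))) volume :=
    hf.comp_aestronglyMeasurable
      (Real.measurable_tan.comp (measurable_id.mul_const c)).aestronglyMeasurable
  exact (intervalIntegrable_const (c := C)).mono_fun' hmeas.restrict
    (Eventually.of_forall fun _ => hC _)

open Real in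
theorem integral_Ioo_comp_tan {E : Type*} [NormedAddCommGroup E] [NormedSpace ℝ E] (f : ℝ → E) :
    ∫ x in Set.Ioo (-(π / 2)) (π / 2), f (tan x) = ∫ u, (1 + u ^ 2)⁻¹ • f u := by
  have hderiv : ∀ x ∈ Set.Ioo (-(π / 2)) (π / 2),
      HasDerivWithinAt tan (1 / cos x ^ 2) (Set.Ioo (-(π / 2)) (π / 2)) x := fun x hx =>
    (hasDerivAt_tan (cos_pos_of_mem_Ioo hx).ne').hasDerivWithinAt
  have hcov := integral_image_eq_integral_abs_deriv_smul measurableSet_Ioo hderiv injOn_tan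
    (fun u => (1 + u ^ 2)⁻¹ • f u)
  rw [image_tan_Ioo, setIntegral_univ] at hcov
  rw [hcov]
  refine setIntegral_congr_fun measurableSet_Ioo fun x hx => ?_
  have hcos : 0 < cos x ^ 2 := pow_pos (cos_pos_of_mem_Ioo hx) 2
  rw [inv_one_add_tan_sq (cos_pos_of_mem_Ioo hx).ne', smul_smul, abs_of_pos (by positivity),
    one_div, inv_mul_cancel₀ hcos.ne', one_smul]

open Real in
theorem intervalIntegral_comp_tan_mul {E : Type*} [NormedAddCommGroup E] [NormedSpace ℝ E]
    [CompleteSpace E] (f : ℝ → E) {c : ℝ} (hc : c ≠ 0) :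
    ∫ x in (0 : ℝ)..π / c, f (tan (x * c)) = c⁻¹ • ∫ u, (1 + u ^ 2)⁻¹ • f u := by
  have hper : Function.Periodic (fun x => f (tan (x * c))) (π / c) :=
    (tan_periodic.comp f).mul_const' c
  have hshift := hper.intervalIntegral_add_eq 0 (-(π / c / 2))
  rw [zero_add, show -(π / c / 2) + π / c = π / c / 2 by ring] at hshift
  rw [hshift, intervalIntegral.integral_comp_mul_right (fun x => f (tan x)) hc,
    show -(π / c / 2) * c = -(π / 2) by field_simp, show π / c / 2 * c = π / 2 by field_simp,
    intervalIntegral.integral_of_le (by linarith [pi_pos]), integral_Ioc_eq_integral_Ioo,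
    integral_Ioo_comp_tan]

theorem stmt8 (p : ℝ) (hp : 1 ≤ p) (N : ℕ) (a : ℕ → ℂ) :
    Tendsto (fun T : ℝ =>
        (1 / (2 * T)) * ∫ t in Set.Ioc (-T) T, ‖dPoly N a (psiMap (Complex.I * (t : ℂ)))‖ ^ p)
      atTop
      (nhds ((1 / Real.pi) *
        ∫ t : ℝ, ‖dPoly N a ((1/2 : ℂ) + (t : ℂ) * Complex.I)‖ ^ p / (1 + t ^ 2))) := by
  have hp₀ : 0 ≤ p := zero_le_one.trans hp
  set c := Real.log 2 / 2
  have hc : 0 < c := div_pos (Real.log_pos one_lt_two) two_pos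
  set g : ℝ → ℝ := fun u => ‖dPoly N a (1 / 2 + u * Complex.I)‖ ^ p
  have hg_cont : Continuous g :=
    ((continuous_dPoly N a).comp (by fun_prop)).norm.rpow_const fun _ => Or.inr hp₀
  have hg_bdd (u : ℝ) : ‖g u‖ ≤ (∑ n ∈ Finset.Icc 1 N, ‖a n‖ * (n : ℝ) ^ (-(1 / 2 : ℝ))) ^ p := by
    rw [Real.norm_of_nonneg (by positivity)]
    exact Real.rpow_le_rpow (norm_nonneg _)
      (by simpa using norm_dPoly_le N a (1 / 2 + u * Complex.I)) hp₀
  have hper : Function.Periodic (fun t => g (Real.tan (t * c))) (Real.pi / c) :=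
    (Real.tan_periodic.comp g).mul_const' c
  have havg := hper.tendsto_average_intervalIntegral (by positivity)
    (intervalIntegrable_comp_tan_mul hg_cont hg_bdd c 0 (Real.pi / c))
  rw [intervalIntegral_comp_tan_mul g hc.ne', smul_smul,
    show (Real.pi / c)⁻¹ * c⁻¹ = 1 / Real.pi by field_simp] at havg
  simp only [smul_eq_mul, inv_mul_eq_div] at havg
  refine havg.congr' ?_
  filter_upwards [eventually_ge_atTop 0] with T hT
  simp only [psiMap_I_mul_ofReal, intervalIntegral.integral_of_le (neg_le_self hT), one_div, c,
    mul_div_assoc, g]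
  exact div_eq_inv_mul _ _
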